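/- The function f(p) = (√(3p) − 1) / (1 − (√3/2)(√(4−3p) − √p)) satisfies f'(p) < 0 for all p ∈ (1/3, 1]; in particular f is strictly decreasing on (1/3, 1] and 0 ≤ f(p) ≤ 1 for all p ∈ (1/3, 1]. -/

import Mathlib

/-!
Substitute `u = √(3p)`, which increases from `1` to `√3` on `(1/3, 1]`. With `w = √(12 - 3u²)`
one has `(√3/2)(√(4 - 3p) - √p) = (w - u)/2`, so `f3 p = 2(u - 1)/(2 + u - w)`. For `1 < u < 2`,
squaring shows `w < 2 + u` (as `(u - 1)(u + 2) > 0`) and `u + w < 4` (as `(u - 1)² > 0`). The first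
makes the denominator positive, the second gives `f3 < 1`, and since `w² = 12 - 3u²` the derivative
in `u` simplifies to `6(u + w - 4)/(w (2 + u - w)²) < 0`.
-/

open Set

noncomputable def f3 (p : ℝ) : ℝ :=
  (Real.sqrt (3 * p) - 1) /
    (1 - (Real.sqrt 3 / 2) * (Real.sqrt (4 - 3 * p) - Real.sqrt p))

noncomputable def f3u (u : ℝ) : ℝ :=
  2 * (u - 1) / (2 + u - √(12 - 3 * u ^ 2))

lemma f3_eq_f3u {p : ℝ} (hp : 0 ≤ p) : f3 p = f3u (√(3 * p)) := by
  have hw : √(12 - 3 * √(3 * p) ^ 2) = √3 * √(4 - 3 * p) := by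
    rw [Real.sq_sqrt (by positivity), ← Real.sqrt_mul (by norm_num)]
    ring_nf
  have hu : √(3 * p) = √3 * √p := Real.sqrt_mul (by norm_num) p
  have hD : 1 - √3 / 2 * (√(4 - 3 * p) - √p) = (2 + √(3 * p) - √3 * √(4 - 3 * p)) / 2 := by
    rw [hu]; ring
  rw [f3, f3u, hw, hD, div_div_eq_mul_div, mul_comm]

lemma sqrt_twelve_sub_lt_two_add {u : ℝ} (hu : 1 < u) : √(12 - 3 * u ^ 2) < 2 + u :=
  (Real.sqrt_lt' (by linarith)).2 (by nlinarith)

lemma sqrt_twelve_sub_lt_four_sub {u : ℝ} (hu : u ≠ 1) (hu4 : u < 4) :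
    √(12 - 3 * u ^ 2) < 4 - u := by
  have : 0 < (u - 1) ^ 2 := by positivity
  exact (Real.sqrt_lt' (by linarith)).2 (by nlinarith)

lemma f3u_pos {u : ℝ} (hu : 1 < u) : 0 < f3u u :=
  div_pos (by linarith) (by linarith [sqrt_twelve_sub_lt_two_add hu])

lemma f3u_lt_one {u : ℝ} (hu : 1 < u) (hu4 : u < 4) : f3u u < 1 := by
  rw [f3u, div_lt_one (by linarith [sqrt_twelve_sub_lt_two_add hu])]
  linarith [sqrt_twelve_sub_lt_four_sub hu.ne' hu4]

lemma hasDerivAt_f3u {u : ℝ} (hu : 1 < u) (hu2 : u ^ 2 < 4) :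
    HasDerivAt f3u
      (6 * (u + √(12 - 3 * u ^ 2) - 4) /
        (√(12 - 3 * u ^ 2) * (2 + u - √(12 - 3 * u ^ 2)) ^ 2)) u := by
  set w := √(12 - 3 * u ^ 2) with hw_def
  have hw : 0 < w := Real.sqrt_pos.2 (by linarith)
  have hw2 : w ^ 2 = 12 - 3 * u ^ 2 := Real.sq_sqrt (by linarith)
  have hD : 2 + u - w ≠ 0 := by linarith [sqrt_twelve_sub_lt_two_add hu]
  have hsqrt : HasDerivAt (fun x => √(12 - 3 * x ^ 2)) (-(3 * (2 * u)) / (2 * w)) u :=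
    (((hasDerivAt_pow 2 u).const_mul 3).const_sub 12).sqrt (by linarith) |>.congr_deriv
      (by simp [w])
  have hnum : HasDerivAt (fun x => 2 * (x - 1)) 2 u := by
    simpa using ((hasDerivAt_id' u).sub_const 1).const_mul 2
  have hden : HasDerivAt (fun x => 2 + x - √(12 - 3 * x ^ 2)) (1 - -(3 * (2 * u)) / (2 * w)) u :=
    ((hasDerivAt_id' u).const_add 2).sub hsqrt
  refine (hnum.div hden hD).congr_deriv ?_
  rw [← hw_def]
  field_simp
  linear_combination (-2) * hw2

lemma sqrt_three_mul_bounds {p : ℝ} (hp : p ∈ Ioo (1 / 3 : ℝ) (4 / 3)) :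
    1 < √(3 * p) ∧ √(3 * p) ^ 2 < 4 := by
  refine ⟨(Real.lt_sqrt zero_le_one).2 (by linarith [hp.1]), ?_⟩
  rw [Real.sq_sqrt (by linarith [hp.1])]
  linarith [hp.2]

lemma exists_hasDerivAt_f3_neg {p : ℝ} (hp : p ∈ Ioo (1 / 3 : ℝ) (4 / 3)) :
    ∃ d < 0, HasDerivAt f3 d p := by
  obtain ⟨hu1, hu2⟩ := sqrt_three_mul_bounds hp
  set u := √(3 * p)
  have hp0 : 0 < p := by linarith [hp.1]
  have hw : 0 < √(12 - 3 * u ^ 2) := Real.sqrt_pos.2 (by linarith)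
  have hD : 0 < 2 + u - √(12 - 3 * u ^ 2) := by linarith [sqrt_twelve_sub_lt_two_add hu1]
  have hkey : u + √(12 - 3 * u ^ 2) < 4 := by
    linarith [sqrt_twelve_sub_lt_four_sub hu1.ne' (by nlinarith)]
  have hsqrt : HasDerivAt (fun x => √(3 * x)) (3 / (2 * u)) p :=
    (((hasDerivAt_id' p).const_mul 3).sqrt (by positivity)).congr_deriv (by simp [u])
  refine ⟨_, mul_neg_of_neg_of_pos ?_ (by positivity),
    ((hasDerivAt_f3u hu1 hu2).comp p hsqrt).congr_of_eventuallyEq ?_⟩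
  · exact div_neg_of_neg_of_pos (by linarith) (by positivity)
  · filter_upwards [Ioi_mem_nhds hp0] with x hx using f3_eq_f3u (le_of_lt hx)

lemma f3_mem_Ioo {p : ℝ} (hp : p ∈ Ioo (1 / 3 : ℝ) (4 / 3)) : f3 p ∈ Ioo 0 1 := by
  obtain ⟨hu1, hu2⟩ := sqrt_three_mul_bounds hp
  rw [f3_eq_f3u (by linarith [hp.1])]
  exact ⟨f3u_pos hu1, f3u_lt_one hu1 (by nlinarith)⟩

/-- `f'(p) < 0` on `(1/3, 1]`; in particular `f` is strictly decreasing there and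
`0 ≤ f(p) ≤ 1` for all `p ∈ (1/3, 1]`. -/
theorem f_decreasing :
    (∀ p ∈ Set.Ioc (1 / 3 : ℝ) 1, deriv f3 p < 0) ∧
      StrictAntiOn f3 (Set.Ioc (1 / 3 : ℝ) 1) ∧
      ∀ p ∈ Set.Ioc (1 / 3 : ℝ) 1, 0 ≤ f3 p ∧ f3 p ≤ 1 := by
  have hIoc : Ioc (1 / 3 : ℝ) 1 ⊆ Ioo (1 / 3) (4 / 3) := Ioc_subset_Ioo_right (by norm_num)
  have hderiv : ∀ p ∈ Ioc (1 / 3 : ℝ) 1, deriv f3 p < 0 := fun p hp => by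
    obtain ⟨d, hd, h⟩ := exists_hasDerivAt_f3_neg (hIoc hp)
    rwa [h.deriv]
  refine ⟨hderiv, strictAntiOn_of_deriv_neg (convex_Ioc _ _) (fun p hp => ?_) (fun p hp => ?_),
    fun p hp => ?_⟩
  · obtain ⟨d, -, h⟩ := exists_hasDerivAt_f3_neg (hIoc hp)
    exact h.continuousAt.continuousWithinAt
  · rw [interior_Ioc] at hp
    exact hderiv p (Ioo_subset_Ioc_self hp)
  · obtain ⟨h0, h1⟩ := f3_mem_Ioo (hIoc hp)
    exact ⟨h0.le, h1.le⟩
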